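/- Let Λ be a finite set, let w assign to each subset Z ⊆ Λ a nonnegative real w(Z), and suppose sup_{x∈Λ} Σ_{y∈Λ} Σ_{Z⊆Λ: x,y∈Z} w(Z) ≤ C₀. Then for every n ≥ 1 and all nonempty X, Y ⊆ Λ, the chain sum a_n := Σ_{Z₁: Z₁∩X≠∅} Σ_{Z₂: Z₂∩Z₁≠∅} ⋯ Σ_{Z_n: Z_n∩Z_{n−1}≠∅ and Z_n∩Y≠∅} ∏_{i=1}^n w(Z_i) satisfies a_n ≤ C₀ⁿ |X|. -/
import Mathlib


noncomputable section

/-- The chain sums `a_n`: for `n ≥ 1`, `chainAux Λ w Y n X` equals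
`Σ_{Z₁∩X≠∅} Σ_{Z₂∩Z₁≠∅} ⋯ Σ_{Zₙ∩Z_{n−1}≠∅, Zₙ∩Y≠∅} ∏ᵢ w(Zᵢ)`,
all `Zᵢ` ranging over subsets of `Λ`. -/
def chainAux {α : Type*} [DecidableEq α] (Λ : Finset α) (w : Finset α → ℝ)
    (Y : Finset α) : ℕ → Finset α → ℝ
  | 0, W => if (W ∩ Y).Nonempty then 1 else 0
  | n + 1, W => ∑ Z ∈ Λ.powerset.filter (fun Z => (Z ∩ W).Nonempty),
      w Z * chainAux Λ w Y n Z

/-- The estimate (A.4): if `sup_{x∈Λ} Σ_{y∈Λ} Σ_{Z∋x,y} w(Z) ≤ C₀` then the chain sum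
satisfies `a_n ≤ C₀ⁿ |X|` for all `n ≥ 1` and nonempty `X, Y ⊆ Λ`. -/
theorem statement_8 {α : Type*} [DecidableEq α] (Λ : Finset α) (w : Finset α → ℝ)
    (hw : ∀ Z : Finset α, 0 ≤ w Z) (C₀ : ℝ)
    (hC₀ : ∀ x ∈ Λ, ∑ y ∈ Λ,
      ∑ Z ∈ Λ.powerset.filter (fun Z => x ∈ Z ∧ y ∈ Z), w Z ≤ C₀)
    (n : ℕ) (hn : 1 ≤ n) (X Y : Finset α) (hXΛ : X ⊆ Λ) (hYΛ : Y ⊆ Λ)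
    (hX : X.Nonempty) (hY : Y.Nonempty) :
    chainAux Λ w Y n X ≤ C₀ ^ n * X.card := by
  have hC₀0 : 0 ≤ C₀ := by
    obtain ⟨x, hx⟩ := hX
    exact le_trans (Finset.sum_nonneg fun y _ => Finset.sum_nonneg fun Z _ => hw Z)
      (hC₀ x (hXΛ hx))
  -- row bound: sum over Z meeting W ≤ sum over x ∈ W of sum over Z ∋ x
  have hrow : ∀ g : Finset α → ℝ, (∀ Z, 0 ≤ g Z) → ∀ W : Finset α,
      ∑ Z ∈ Λ.powerset.filter (fun Z => (Z ∩ W).Nonempty), g Z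
        ≤ ∑ x ∈ W, ∑ Z ∈ Λ.powerset.filter (fun Z => x ∈ Z), g Z := by
    intro g hg W
    have hr : ∑ x ∈ W, ∑ Z ∈ Λ.powerset.filter (fun Z => x ∈ Z), g Z
        = ∑ Z ∈ Λ.powerset, ((W.filter (fun x => x ∈ Z)).card : ℝ) * g Z := by
      simp_rw [Finset.sum_filter]
      rw [Finset.sum_comm]
      refine Finset.sum_congr rfl fun Z _ => ?_
      rw [← Finset.sum_filter, Finset.sum_const, nsmul_eq_mul]
    rw [hr, Finset.sum_filter]
    refine Finset.sum_le_sum fun Z hZ => ?_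
    by_cases h : (Z ∩ W).Nonempty
    · simp only [h, if_true]
      have hcard : 1 ≤ ((W.filter (fun x => x ∈ Z)).card : ℝ) := by
        have : (W.filter (fun x => x ∈ Z)).Nonempty := by
          obtain ⟨a, ha⟩ := h
          exact ⟨a, Finset.mem_filter.2 ⟨(Finset.mem_inter.1 ha).2, (Finset.mem_inter.1 ha).1⟩⟩
        exact_mod_cast Finset.card_pos.2 this
      exact le_mul_of_one_le_left (hg Z) hcard
    · simp only [h, if_false]
      exact mul_nonneg (by positivity) (hg Z)
  -- column bound: for x ∈ Λ, ∑_{Z ∋ x} |Z| w Z ≤ C₀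
  have hcol : ∀ x ∈ Λ, ∑ Z ∈ Λ.powerset.filter (fun Z => x ∈ Z), (Z.card : ℝ) * w Z ≤ C₀ := by
    intro x hx
    refine le_trans (le_of_eq ?_) (hC₀ x hx)
    simp_rw [Finset.sum_filter]
    rw [Finset.sum_comm]
    refine Finset.sum_congr rfl fun Z hZ => ?_
    have hZΛ : Z ⊆ Λ := Finset.mem_powerset.1 hZ
    by_cases h : x ∈ Z
    · simp only [h, true_and, if_true]
      rw [← Finset.sum_filter, Finset.sum_const, nsmul_eq_mul]
      congr 2
      rw [Finset.filter_mem_eq_inter, Finset.inter_eq_right.2 hZΛ]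
    · simp [h]
  -- main induction
  have main : ∀ m (W : Finset α), W ⊆ Λ → W.Nonempty →
      chainAux Λ w Y m W ≤ C₀ ^ m * W.card := by
    intro m
    induction m with
    | zero =>
      intro W hWΛ hW
      have : (1 : ℝ) ≤ W.card := by exact_mod_cast Finset.card_pos.2 hW
      simp only [chainAux, pow_zero, one_mul]
      split
      · exact this
      · exact le_trans zero_le_one this
    | succ k ih =>
      intro W hWΛ hW
      have step1 : chainAux Λ w Y (k + 1) W
          ≤ ∑ Z ∈ Λ.powerset.filter (fun Z => (Z ∩ W).Nonempty),
              w Z * (C₀ ^ k * Z.card) := by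
        refine Finset.sum_le_sum fun Z hZ => ?_
        rw [Finset.mem_filter, Finset.mem_powerset] at hZ
        have hZne : Z.Nonempty := by
          obtain ⟨a, ha⟩ := hZ.2
          exact ⟨a, (Finset.mem_inter.1 ha).1⟩
        exact mul_le_mul_of_nonneg_left (ih Z hZ.1 hZne) (hw Z)
      have step2 : ∑ Z ∈ Λ.powerset.filter (fun Z => (Z ∩ W).Nonempty),
              w Z * (C₀ ^ k * Z.card)
          ≤ ∑ x ∈ W, ∑ Z ∈ Λ.powerset.filter (fun Z => x ∈ Z),
              w Z * (C₀ ^ k * Z.card) :=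
        hrow _ (fun Z => mul_nonneg (hw Z) (by positivity)) W
      have step3 : ∀ x ∈ W, ∑ Z ∈ Λ.powerset.filter (fun Z => x ∈ Z),
              w Z * (C₀ ^ k * Z.card) ≤ C₀ ^ k * C₀ := by
        intro x hx
        have := hcol x (hWΛ hx)
        calc ∑ Z ∈ Λ.powerset.filter (fun Z => x ∈ Z), w Z * (C₀ ^ k * Z.card)
            = C₀ ^ k * ∑ Z ∈ Λ.powerset.filter (fun Z => x ∈ Z), (Z.card : ℝ) * w Z := by
              rw [Finset.mul_sum]; refine Finset.sum_congr rfl fun Z _ => by ring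
          _ ≤ C₀ ^ k * C₀ := mul_le_mul_of_nonneg_left this (by positivity)
      calc chainAux Λ w Y (k + 1) W ≤ _ := step1
        _ ≤ _ := step2
        _ ≤ ∑ x ∈ W, C₀ ^ k * C₀ := Finset.sum_le_sum step3
        _ = C₀ ^ (k + 1) * W.card := by
            rw [Finset.sum_const, nsmul_eq_mul, pow_succ]; ring
  exact main n X hXΛ hX
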